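/- Let A, B > 0, κ = B/A, σ > 1/2, and for each n let I_n(f) = ∑_{k=1}^{L_n} f(x_{n,k}) w_{n,k} be a quadrature rule with nodes x_{n,k} ∈ 𝕋 and complex weights w_{n,k} such that I_n(p) = ∫₀¹ p(x) dx for all p ∈ 𝒯_n and |I_n(g)| ≤ √κ ‖g‖_∞ for every continuous g on 𝕋. Then for every f ∈ H^σ(𝕋) (identified with its continuous representative) and every n ≥ 1, |∫₀¹ f(x) dx − I_n(f)| ≤ (1 + √κ) (σ − 1/2)^{-1/2} n^{-σ+1/2} ‖f‖_{H^σ}. -/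

import Mathlib

open MeasureTheory AddCircle

noncomputable section

/-- The torus `𝕋 = ℝ/ℤ`. -/
abbrev Torus := UnitAddCircle

/-- Normalized Haar (Lebesgue) probability measure on the torus. -/
abbrev haar : Measure Torus := AddCircle.haarAddCircle

/-- `p` is a trigonometric polynomial of degree `n`. -/
def IsTrigPoly (n : ℕ) (p : Torus → ℂ) : Prop :=
  ∃ c : ℤ → ℂ, p = fun x => ∑ l ∈ Finset.Icc (-(n : ℤ)) (n : ℤ), c l * fourier l x

/-- The square of the Sobolev norm `‖f‖_{H^σ}² = ∑_{k∈ℤ} |f̂(k)|² (1+k²)^σ`. -/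
def sobolevNormSq (σ : ℝ) (f : Torus → ℂ) : ℝ :=
  ∑' k : ℤ, ‖fourierCoeff f k‖ ^ 2 * (1 + (k : ℝ) ^ 2) ^ σ

/-- Membership in the Sobolev space `H^σ(𝕋)`. -/
def InHσ (σ : ℝ) (f : Torus → ℂ) : Prop :=
  MemLp f 2 haar ∧ Summable (fun k : ℤ => ‖fourierCoeff f k‖ ^ 2 * (1 + (k : ℝ) ^ 2) ^ σ)

/-!
Let `p` be the Fourier partial sum of `f` of degree `n`. Exactness on `p` reduces the error to
`∫ (f - p) - I_n (f - p)`, which is at most `(1 + √κ) ‖f - p‖_∞ ≤ (1 + √κ) ∑_{|l| > n} |f̂ l|`.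
Cauchy–Schwarz with the weights `(1 + l²)^{± σ}` bounds this tail by
`‖f‖_{H^σ} (∑_{|l| > n} (1 + l²)^{-σ})^{1/2}`, and the integral test bounds the last sum by
`2 ∫_n^∞ t^{-2σ} dt = n^{1 - 2σ} / (σ - 1/2)`.
-/

def highFreq (n : ℕ) : Set ℤ := (↑(Finset.Icc (-(n : ℤ)) n))ᶜ

theorem mem_highFreq {n : ℕ} {l : ℤ} : l ∈ highFreq n ↔ n < |l| := by
  simp only [highFreq, Set.mem_compl_iff, Finset.coe_Icc, Set.mem_Icc, not_and_or, not_le, lt_abs]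
  omega

def highFreqEquiv (n : ℕ) : ℕ ⊕ ℕ ≃ highFreq n :=
  Equiv.ofBijective
    (Sum.elim
      (fun m => ⟨(m + n + 1 : ℕ), mem_highFreq.2 (by rw [abs_of_nonneg (by omega)]; omega)⟩)
      (fun m => ⟨-(m + n + 1 : ℕ),
        mem_highFreq.2 (by rw [abs_neg, abs_of_nonneg (by omega)]; omega)⟩))
    ⟨by
      rintro (a | a) (b | b) h <;>
        simp only [Sum.elim_inl, Sum.elim_inr, Subtype.mk.injEq, Sum.inl.injEq, Sum.inr.injEq,
          reduceCtorEq] at h ⊢ <;> omega,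
     by
      rintro ⟨l, hl⟩
      rcases le_or_gt 0 l with h | h
      · rw [mem_highFreq, abs_of_nonneg h] at hl
        exact ⟨.inl (l.toNat - n - 1), Subtype.ext (by simp only [Sum.elim_inl]; omega)⟩
      · rw [mem_highFreq, abs_of_neg h] at hl
        exact ⟨.inr ((-l).toNat - n - 1), Subtype.ext (by simp only [Sum.elim_inr]; omega)⟩⟩

theorem hasSum_highFreq_of_even {n : ℕ} {g : ℤ → ℝ} {a : ℝ} (hg : ∀ l, g (-l) = g l)
    (h : HasSum (fun m : ℕ => g (m + n + 1 : ℕ)) a) :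
    HasSum (fun l : highFreq n => g l) (2 * a) := by
  rw [← (highFreqEquiv n).hasSum_iff, two_mul]
  exact HasSum.sum h (by convert h using 2 with m; exact hg _)

theorem summable_and_tsum_rpow_neg_nat_add_succ_le {s : ℝ} (hs : 1 < s) {N : ℕ} (hN : 0 < N) :
    Summable (fun m : ℕ => ((m + N + 1 : ℕ) : ℝ) ^ (-s)) ∧
      ∑' m : ℕ, ((m + N + 1 : ℕ) : ℝ) ^ (-s) ≤ (N : ℝ) ^ (1 - s) / (s - 1) := by
  have hN' : (0 : ℝ) < N := Nat.cast_pos.2 hN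
  have anti : AntitoneOn (fun t : ℝ => t ^ (-s)) (Set.Ici (N : ℝ)) := fun a ha b _ hab =>
    Real.rpow_le_rpow_of_nonpos (hN'.trans_le ha) hab (by linarith)
  refine ⟨(summable_nat_add_iff (N + 1)).2 (Real.summable_nat_rpow.2 (by linarith)), ?_⟩
  calc ∑' m : ℕ, ((m + N + 1 : ℕ) : ℝ) ^ (-s)
      ≤ ∫ t in Set.Ioi (N : ℝ), t ^ (-s) :=
        anti.tsum_comp_add_le_integral N (integrableOn_Ioi_rpow_of_lt (by linarith) hN')
          fun t ht => Real.rpow_nonneg (hN'.trans ht).le _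
    _ = (N : ℝ) ^ (1 - s) / (s - 1) := by
        rw [integral_Ioi_rpow_of_lt (by linarith) hN', neg_div, ← div_neg, neg_add', neg_neg,
          neg_add_eq_sub]

theorem summable_abs_and_tsum_abs_le_sqrt_mul_sqrt {ι : Type*} {a w : ι → ℝ} (hw : ∀ i, 0 < w i)
    (ha : Summable fun i => a i ^ 2 * w i) (hw' : Summable fun i => (w i)⁻¹) :
    Summable (fun i => |a i|) ∧
      ∑' i, |a i| ≤ √(∑' i, a i ^ 2 * w i) * √(∑' i, (w i)⁻¹) := by
  have hfg : ∀ i, (|a i| * √(w i)) * (√(w i))⁻¹ = |a i| := fun i => by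
    rw [mul_assoc, mul_inv_cancel₀ (Real.sqrt_pos.2 (hw i)).ne', mul_one]
  have hf2 : ∀ i, (|a i| * √(w i)) ^ (2 : ℝ) = a i ^ 2 * w i := fun i => by
    rw [Real.rpow_two, mul_pow, sq_abs, Real.sq_sqrt (hw i).le]
  have hg2 : ∀ i, (√(w i))⁻¹ ^ (2 : ℝ) = (w i)⁻¹ := fun i => by
    rw [Real.rpow_two, inv_pow, Real.sq_sqrt (hw i).le]
  have := Real.summable_and_inner_le_Lp_mul_Lq_tsum_of_nonneg Real.HolderConjugate.two_two
    (fun i => mul_nonneg (abs_nonneg (a i)) (Real.sqrt_nonneg (w i)))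
    (fun i => inv_nonneg.2 (Real.sqrt_nonneg (w i))) (by simpa only [hf2] using ha)
    (by simpa only [hg2] using hw')
  simpa only [hfg, hf2, hg2, ← Real.sqrt_eq_rpow] using this

theorem summable_and_tsum_highFreq_rpow_neg_le {σ : ℝ} (hσ : 1 / 2 < σ) {n : ℕ} (hn : 0 < n) :
    Summable (fun l : highFreq n => (1 + (l : ℝ) ^ 2) ^ (-σ)) ∧
      ∑' l : highFreq n, (1 + (l : ℝ) ^ 2) ^ (-σ) ≤ (σ - 1 / 2)⁻¹ * (n : ℝ) ^ (1 - 2 * σ) := by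
  obtain ⟨hsum, hle⟩ := summable_and_tsum_rpow_neg_nat_add_succ_le (s := 2 * σ) (by linarith) hn
  have hpt : ∀ m : ℕ,
      (1 + ((m + n + 1 : ℕ) : ℝ) ^ 2) ^ (-σ) ≤ ((m + n + 1 : ℕ) : ℝ) ^ (-(2 * σ)) := by
    intro m
    have hpos : (0 : ℝ) < ((m + n + 1 : ℕ) : ℝ) ^ 2 := by positivity
    calc (1 + ((m + n + 1 : ℕ) : ℝ) ^ 2) ^ (-σ) ≤ (((m + n + 1 : ℕ) : ℝ) ^ 2) ^ (-σ) :=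
          Real.rpow_le_rpow_of_nonpos hpos (by linarith) (by linarith)
      _ = ((m + n + 1 : ℕ) : ℝ) ^ (-(2 * σ)) := by
          rw [← Real.rpow_natCast, ← Real.rpow_mul (Nat.cast_nonneg _)]
          ring_nf
  have hsum' : Summable fun m : ℕ => (1 + ((m + n + 1 : ℕ) : ℝ) ^ 2) ^ (-σ) :=
    hsum.of_nonneg_of_le (fun _ => by positivity) hpt
  have htail := hasSum_highFreq_of_even (g := fun l : ℤ => (1 + (l : ℝ) ^ 2) ^ (-σ))
    (fun l => by simp only [Int.cast_neg, neg_sq])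
    (by simpa only [Int.cast_natCast] using hsum'.hasSum)
  refine ⟨htail.summable, htail.tsum_eq.trans_le ?_⟩
  calc 2 * ∑' m : ℕ, (1 + ((m + n + 1 : ℕ) : ℝ) ^ 2) ^ (-σ)
      ≤ 2 * ((n : ℝ) ^ (1 - 2 * σ) / (2 * σ - 1)) := by
        gcongr
        exact (hsum'.tsum_le_tsum hpt hsum).trans hle
    _ = (σ - 1 / 2)⁻¹ * (n : ℝ) ^ (1 - 2 * σ) := by
        field_simp

theorem summable_and_tsum_highFreq_norm_le {σ : ℝ} (hσ : 1 / 2 < σ) {n : ℕ} (hn : 0 < n)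
    {c : ℤ → ℂ} (hc : Summable fun k : ℤ => ‖c k‖ ^ 2 * (1 + (k : ℝ) ^ 2) ^ σ) :
    Summable (fun l : highFreq n => ‖c l‖) ∧
      ∑' l : highFreq n, ‖c l‖ ≤ √(∑' k : ℤ, ‖c k‖ ^ 2 * (1 + (k : ℝ) ^ 2) ^ σ) *
        ((σ - 1 / 2) ^ (-(1 / 2 : ℝ)) * (n : ℝ) ^ (-σ + 1 / 2)) := by
  have hw : ∀ l : highFreq n, 0 < (1 + ((l : ℤ) : ℝ) ^ 2) ^ σ := fun l => by positivity
  obtain ⟨hinv, hinv_le⟩ := summable_and_tsum_highFreq_rpow_neg_le hσ hn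
  have hneg : ∀ l : highFreq n,
      (1 + ((l : ℤ) : ℝ) ^ 2) ^ (-σ) = ((1 + ((l : ℤ) : ℝ) ^ 2) ^ σ)⁻¹ :=
    fun l => Real.rpow_neg (by positivity) σ
  simp only [hneg] at hinv hinv_le
  obtain ⟨hsum, hle⟩ := summable_abs_and_tsum_abs_le_sqrt_mul_sqrt hw (hc.subtype _) hinv
  simp only [abs_norm] at hsum hle
  refine ⟨hsum, hle.trans (mul_le_mul ?_ ?_ (Real.sqrt_nonneg _) (Real.sqrt_nonneg _))⟩
  · exact Real.sqrt_le_sqrt (hc.tsum_subtype_le _ _ fun k => by positivity)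
  · refine (Real.sqrt_le_sqrt hinv_le).trans_eq ?_
    rw [Real.sqrt_mul (inv_nonneg.2 (by linarith)), Real.sqrt_eq_rpow, Real.sqrt_eq_rpow,
      ← Real.rpow_neg_one, ← Real.rpow_mul (by linarith), ← Real.rpow_mul (Nat.cast_nonneg n)]
    ring_nf

theorem norm_sub_sum_fourier_le_tsum_compl {T : ℝ} [Fact (0 < T)] {f : AddCircle T → ℂ}
    (hf : Continuous f) (S : Finset ℤ)
    (hsum : Summable fun l : ↥((S : Set ℤ)ᶜ) => ‖fourierCoeff f l‖) (y : AddCircle T) :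
    ‖f y - ∑ l ∈ S, fourierCoeff f l * fourier l y‖ ≤
      ∑' l : ↥((S : Set ℤ)ᶜ), ‖fourierCoeff f l‖ := by
  have hnorm : ∀ l, ‖fourierCoeff f l * fourier l y‖ = ‖fourierCoeff f l‖ := fun l => by
    rw [norm_mul, fourier_apply, Circle.norm_coe, mul_one]
  have hc : Summable (fourierCoeff f) :=
    (S.finite_toSet.summable_compl_iff (f := fun l => ‖fourierCoeff f l‖)).1 hsum |>.of_norm
  have hF := has_pointwise_sum_fourier_series_of_summable (f := ⟨f, hf⟩) hc y
  simp only [ContinuousMap.coe_mk] at hF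
  rw [← hF.tsum_eq, ← hF.summable.sum_add_tsum_compl (s := S)]
  simp only [smul_eq_mul, add_sub_cancel_left]
  refine (norm_tsum_le_tsum_norm ?_).trans_eq ?_
  · simpa only [hnorm] using hsum
  · simp only [hnorm]

theorem norm_integral_sub_quadrature_le {X ι : Type*} [MeasurableSpace X] [Fintype ι]
    {μ : Measure X} [IsProbabilityMeasure μ] {f p : X → ℂ} (hf : Integrable f μ)
    (hp : Integrable p μ) (x : ι → X) (w : ι → ℂ) {C ε : ℝ} (hC : 0 ≤ C)
    (hfp : ∀ t, ‖f t - p t‖ ≤ ε) (hexact : ∑ k, p (x k) * w k = ∫ t, p t ∂μ)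
    (hbound : ‖∑ k, (p (x k) - f (x k)) * w k‖ ≤ C * ⨆ t, ‖p t - f t‖) :
    ‖(∫ t, f t ∂μ) - ∑ k, f (x k) * w k‖ ≤ (1 + C) * ε := by
  have := nonempty_of_isProbabilityMeasure μ
  have hsplit : (∫ t, f t ∂μ) - ∑ k, f (x k) * w k =
      (∫ t, f t - p t ∂μ) + ∑ k, (p (x k) - f (x k)) * w k := by
    simp only [integral_sub hf hp, sub_mul, Finset.sum_sub_distrib, hexact]
    ring
  have hint : ‖∫ t, f t - p t ∂μ‖ ≤ ε := by
    simpa using norm_integral_le_of_norm_le_const (μ := μ) (Filter.Eventually.of_forall hfp)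
  have hsup : ⨆ t, ‖p t - f t‖ ≤ ε := ciSup_le fun t => norm_sub_rev (f t) (p t) ▸ hfp t
  calc ‖(∫ t, f t ∂μ) - ∑ k, f (x k) * w k‖
      ≤ ‖∫ t, f t - p t ∂μ‖ + ‖∑ k, (p (x k) - f (x k)) * w k‖ := hsplit ▸ norm_add_le _ _
    _ ≤ ε + C * ε := add_le_add hint (hbound.trans (mul_le_mul_of_nonneg_left hsup hC))
    _ = (1 + C) * ε := by ring

theorem quadrature_error_sobolev_general
    (A B : ℝ) (σ : ℝ) (hσ : 1 / 2 < σ)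
    (L : ℕ → ℕ) (x : ∀ n, Fin (L n) → Torus) (w : ∀ n, Fin (L n) → ℂ)
    (hexact : ∀ n (p : Torus → ℂ), IsTrigPoly n p →
      ∑ k, p (x n k) * w n k = ∫ t, p t ∂haar)
    (hbound : ∀ n (g : Torus → ℂ), Continuous g →
      ‖∑ k, g (x n k) * w n k‖ ≤ Real.sqrt (B / A) * ⨆ t : Torus, ‖g t‖) :
    ∀ f : Torus → ℂ, InHσ σ f → Continuous f →
      ∀ n : ℕ, 1 ≤ n →
        ‖(∫ t, f t ∂haar) - ∑ k, f (x n k) * w n k‖ ≤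
          (1 + Real.sqrt (B / A)) * (σ - 1 / 2) ^ (-(1 / 2 : ℝ)) *
            (n : ℝ) ^ (-σ + 1 / 2) * Real.sqrt (sobolevNormSq σ f) := by
  intro f hf hcont n hn
  obtain ⟨hsum, htail⟩ := summable_and_tsum_highFreq_norm_le hσ hn hf.2
  set p : Torus → ℂ := fun y => ∑ l ∈ Finset.Icc (-(n : ℤ)) n, fourierCoeff f l * fourier l y
  have hp : Continuous p := by fun_prop
  have hfp (y : Torus) := norm_sub_sum_fourier_le_tsum_compl hcont _ hsum y
  calc ‖(∫ t, f t ∂haar) - ∑ k, f (x n k) * w n k‖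
      ≤ (1 + √(B / A)) * ∑' l : highFreq n, ‖fourierCoeff f l‖ :=
        norm_integral_sub_quadrature_le (hcont.integrable_of_hasCompactSupport
            (.of_compactSpace f)) (hp.integrable_of_hasCompactSupport (.of_compactSpace p))
          (x n) (w n) (Real.sqrt_nonneg _) hfp (hexact n p ⟨fourierCoeff f, rfl⟩)
          (hbound n _ (hp.sub hcont))
    _ ≤ _ := mul_le_mul_of_nonneg_left htail (by positivity)
    _ = _ := by rw [sobolevNormSq]; ring

/-- quadrature rules, exact on `𝒯_n` and bounded by `√κ ‖·‖_∞`,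
satisfy for `σ > 1/2` and `f ∈ H^σ(𝕋)` (identified with its continuous
representative) the error bound
`|∫ f − I_n(f)| ≤ (1+√κ) (σ−1/2)^{-1/2} n^{-σ+1/2} ‖f‖_{H^σ}` for `n ≥ 1`. -/
theorem quadrature_error_sobolev
    (A B : ℝ) (hA : 0 < A) (hB : 0 < B) (σ : ℝ) (hσ : 1 / 2 < σ)
    (L : ℕ → ℕ) (x : ∀ n, Fin (L n) → Torus) (w : ∀ n, Fin (L n) → ℂ)
    (hexact : ∀ n (p : Torus → ℂ), IsTrigPoly n p →
      ∑ k, p (x n k) * w n k = ∫ t, p t ∂haar)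
    (hbound : ∀ n (g : Torus → ℂ), Continuous g →
      ‖∑ k, g (x n k) * w n k‖ ≤ Real.sqrt (B / A) * ⨆ t : Torus, ‖g t‖) :
    ∀ f : Torus → ℂ, InHσ σ f → Continuous f →
      ∀ n : ℕ, 1 ≤ n →
        ‖(∫ t, f t ∂haar) - ∑ k, f (x n k) * w n k‖ ≤
          (1 + Real.sqrt (B / A)) * (σ - 1 / 2) ^ (-(1 / 2 : ℝ)) *
            (n : ℝ) ^ (-σ + 1 / 2) * Real.sqrt (sobolevNormSq σ f) :=
  quadrature_error_sobolev_general A B σ hσ L x w hexact hbound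

end
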